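/- Let k ≥ 0 and n ≥ k+2, and let X be a homogeneous and spatially independent random subcomplex of Δₙ. Then r_k ≥ q₀ · s_k^{k+1}. -/
import Mathlib


open MeasureTheory Finset Filter


/-- A (sub)complex of the complete complex on the vertex type `V`:
a family of finite subsets closed under taking subsets and containing `∅`. -/
def SComplex {V : Type*} [DecidableEq V] (Y : Finset (Finset V)) : Prop :=
  ∅ ∈ Y ∧ ∀ σ ∈ Y, ∀ τ ∈ σ.powerset, τ ∈ Y

instance {V : Type*} [DecidableEq V] :
    DecidablePred (fun Y : Finset (Finset V) => SComplex Y) :=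
  fun Y => decidable_of_iff (∅ ∈ Y ∧ ∀ σ ∈ Y, ∀ τ ∈ σ.powerset, τ ∈ Y) Iff.rfl

/-- `scount Y m` = number of simplices of `Y` with `m` vertices (i.e. `(m-1)`-simplices);
`f_k(Y) = scount Y (k+1)` and `f_{-1}(Y) = scount Y 0`. -/
def scount {V : Type*} (Y : Finset (Finset V)) (m : ℕ) : ℕ :=
  (Y.filter (fun σ => σ.card = m)).card

/-- Number of external `i`-simplices of `Y` in the complete complex on `Fin n`:
`i`-simplices `σ ∉ Y` all of whose strict subsets lie in `Y`. -/
def ecount {n : ℕ} (Y : Finset (Finset (Fin n))) (i : ℕ) : ℕ :=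
  (Finset.univ.filter (fun σ : Finset (Fin n) =>
    σ.card = i + 1 ∧ σ ∉ Y ∧ ∀ τ ∈ σ.powerset, τ ≠ σ → τ ∈ Y)).card

/-- The weight `∏_{i=0}^{n-1} p_i^{f_i(Y)} (1-p_i)^{e_i(Y)}` of the
multi-parameter random simplicial complex model. -/
noncomputable def mpWeight {n : ℕ} (p : Fin n → ℝ) (Y : Finset (Finset (Fin n))) : ℝ :=
  ∏ i : Fin n, p i ^ scount Y (i.1 + 1) * (1 - p i) ^ ecount Y i.1

/-- The probability of an event, as a real number. -/
noncomputable def prb {Ω : Type*} [MeasurableSpace Ω] (μ : Measure Ω) (A : Set Ω) : ℝ :=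
  (μ A).toReal

/-- Conditional probability `P(A | B)`, as a real number. -/
noncomputable def condP {Ω : Type*} [MeasurableSpace Ω] (μ : Measure Ω) (A B : Set Ω) : ℝ :=
  prb μ (A ∩ B) / prb μ B

/-- A random subcomplex is homogeneous if its distribution is invariant under
every permutation of the vertices. -/
def Homogeneous {n : ℕ} {Ω : Type*} [MeasurableSpace Ω] (μ : Measure Ω)
    (X : Ω → Finset (Finset (Fin n))) : Prop :=
  ∀ (g : Equiv.Perm (Fin n)) (Y : Finset (Finset (Fin n))),
    prb μ {ω | Finset.image (fun σ => σ.image (⇑g)) (X ω) = Y} = prb μ {ω | X ω = Y}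

/-- Spatial independence of a random subcomplex. -/
def SpatInd {n : ℕ} {Ω : Type*} [MeasurableSpace Ω] (μ : Measure Ω)
    (X : Ω → Finset (Finset (Fin n))) : Prop :=
  ∀ Y₁ Y₂ : Finset (Finset (Fin n)), SComplex Y₁ → SComplex Y₂ →
    prb μ {ω | Y₁ ∪ Y₂ ⊆ X ω} * prb μ {ω | Y₁ ∩ Y₂ ⊆ X ω} =
      prb μ {ω | Y₁ ⊆ X ω} * prb μ {ω | Y₂ ⊆ X ω}

/-- The `k`-dimensional standard simplex `{0, 1, …, k}` in `Fin n`
(for `k = -1` this is the empty simplex). -/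
def stdSimp (n : ℕ) (k : ℤ) : Finset (Fin n) :=
  Finset.univ.filter (fun v => (v : ℤ) ≤ k)

/-- The `k`-dimensional simplex `{1, 2, …, k+1}` in `Fin n`,
sharing `k` vertices with `stdSimp n k`. -/
def stdSimp' (n : ℕ) (k : ℕ) : Finset (Fin n) :=
  Finset.univ.filter (fun v => 1 ≤ (v : ℕ) ∧ (v : ℕ) ≤ k + 1)

/-- The parameter `q_k = P(τ ∈ X)` for a `k`-simplex `τ` (with `q_{-1} = 1`). -/
noncomputable def qpar {n : ℕ} {Ω : Type*} [MeasurableSpace Ω] (μ : Measure Ω)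
    (X : Ω → Finset (Finset (Fin n))) (k : ℤ) : ℝ :=
  if k < 0 then 1 else prb μ {ω | stdSimp n k ∈ X ω}

/-- The parameter `r_k = P(σ ∈ X | τ ∈ X)` for a `(k+1)`-simplex `σ` containing the
`k`-simplex `τ`, if `q_k > 0`, and `0` otherwise (with `r_{-1} = q_0`). -/
noncomputable def rpar {n : ℕ} {Ω : Type*} [MeasurableSpace Ω] (μ : Measure Ω)
    (X : Ω → Finset (Finset (Fin n))) (k : ℤ) : ℝ :=
  if 0 < qpar μ X k then
    condP μ {ω | stdSimp n (k + 1) ∈ X ω} {ω | stdSimp n k ∈ X ω}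
  else 0

/-- The parameter `s_k = P(τ₁ ∪ τ₂ ∈ X | τ₁ ∈ X, τ₂ ∈ X)` for `k`-simplices `τ₁, τ₂`
sharing `k` vertices, if `P(τ₁ ∈ X, τ₂ ∈ X) > 0`, and `0` otherwise. -/
noncomputable def spar {n : ℕ} {Ω : Type*} [MeasurableSpace Ω] (μ : Measure Ω)
    (X : Ω → Finset (Finset (Fin n))) (k : ℕ) : ℝ :=
  if 0 < prb μ ({ω | stdSimp n k ∈ X ω} ∩ {ω | stdSimp' n k ∈ X ω}) then
    condP μ {ω | stdSimp n (k + 1) ∈ X ω}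
      ({ω | stdSimp n k ∈ X ω} ∩ {ω | stdSimp' n k ∈ X ω})
  else 0

section Aux
variable {n : ℕ} {Ω : Type*} [MeasurableSpace Ω] (μ : Measure Ω) [IsProbabilityMeasure μ]
  (X : Ω → Finset (Finset (Fin n)))

lemma prb_nonneg (A : Set Ω) : 0 ≤ prb μ A := ENNReal.toReal_nonneg

lemma prb_mono {A B : Set Ω} (h : A ⊆ B) : prb μ A ≤ prb μ B :=
  ENNReal.toReal_mono (measure_ne_top μ B) (measure_mono h)

lemma prb_univ : prb μ (Set.univ) = 1 := by simp [prb]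

variable (hmeas : ∀ Y, MeasurableSet {ω | X ω = Y})

include hmeas in
lemma meas_pred (p : Finset (Finset (Fin n)) → Prop) : MeasurableSet {ω | p (X ω)} := by
  have h : {ω | p (X ω)} = ⋃ (Y) (_ : p Y), {ω | X ω = Y} := by
    ext ω; simp
  rw [h]
  exact MeasurableSet.iUnion fun Y => MeasurableSet.iUnion fun _ => hmeas Y

include hmeas in
lemma prb_decompose (p : Finset (Finset (Fin n)) → Prop) [DecidablePred p] :
    prb μ {ω | p (X ω)} = ∑ Y ∈ Finset.univ.filter p, prb μ {ω | X ω = Y} := by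
  classical
  have h : {ω | p (X ω)} = ⋃ Y ∈ Finset.univ.filter p, {ω | X ω = Y} := by
    ext ω; simp
  rw [prb, h, measure_biUnion_finset ?disj (fun Y _ => hmeas Y)]
  · rw [ENNReal.toReal_sum (fun Y _ => measure_ne_top μ _)]
    rfl
  case disj =>
    intro Y hY Z hZ hne
    simp only [Set.disjoint_left]
    rintro ω rfl h2
    exact hne h2

end Aux

section Hom
set_option linter.unusedSectionVars false
variable {n : ℕ} {Ω : Type*} [MeasurableSpace Ω] (μ : Measure Ω) [IsProbabilityMeasure μ]
  (X : Ω → Finset (Finset (Fin n)))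
  (hmeas : ∀ Y, MeasurableSet {ω | X ω = Y})
  (hhom : Homogeneous μ X)

noncomputable def mapg (g : Equiv.Perm (Fin n)) (Y : Finset (Finset (Fin n))) :
    Finset (Finset (Fin n)) := Y.image (fun σ => σ.image ⇑g)

lemma mapg_inv (g : Equiv.Perm (Fin n)) (Z : Finset (Finset (Fin n))) :
    mapg g⁻¹ (mapg g Z) = Z := by
  simp only [mapg, Finset.image_image]
  have : ((fun σ : Finset (Fin n) => σ.image ⇑g⁻¹) ∘ (fun σ => σ.image ⇑g)) = id := by
    funext σ
    simp [Finset.image_image, Function.comp_def]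
  rw [this, Finset.image_id]

lemma mapg_injective (g : Equiv.Perm (Fin n)) : Function.Injective (mapg (n := n) g) :=
  Finset.image_injective (Finset.image_injective g.injective)

lemma mapg_subset_iff (g : Equiv.Perm (Fin n)) {F Z : Finset (Finset (Fin n))} :
    mapg g F ⊆ mapg g Z ↔ F ⊆ Z :=
  Finset.image_subset_image_iff (Finset.image_injective g.injective)

include hhom in
lemma prb_point_perm (g : Equiv.Perm (Fin n)) (Z : Finset (Finset (Fin n))) :
    prb μ {ω | X ω = mapg g Z} = prb μ {ω | X ω = Z} := by
  have h := hhom g (mapg g Z)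
  have hset : {ω | Finset.image (fun σ => σ.image ⇑g) (X ω) = mapg g Z} = {ω | X ω = Z} := by
    ext ω
    exact ⟨fun hm => mapg_injective g hm, fun hm => by simp [Set.mem_setOf_eq] at hm ⊢; rw [hm]; rfl⟩
  rw [hset] at h
  exact h.symm

include hhom hmeas in
lemma prb_subset_perm (g : Equiv.Perm (Fin n)) (F : Finset (Finset (Fin n))) :
    prb μ {ω | mapg g F ⊆ X ω} = prb μ {ω | F ⊆ X ω} := by
  classical
  rw [prb_decompose μ X hmeas (fun Y => mapg g F ⊆ Y), prb_decompose μ X hmeas (fun Y => F ⊆ Y)]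
  refine Finset.sum_nbij' (fun W => mapg g⁻¹ W) (fun Z => mapg g Z) ?_ ?_ ?_ ?_ ?_
  · intro W hW
    simp only [Finset.mem_filter, Finset.mem_univ, true_and] at hW ⊢
    have := Finset.image_subset_image (f := fun σ : Finset (Fin n) => σ.image ⇑g⁻¹) hW
    rwa [show (mapg g F).image (fun σ : Finset (Fin n) => σ.image ⇑g⁻¹) = mapg g⁻¹ (mapg g F) from rfl,
      mapg_inv] at this
  · intro Z hZ
    simp only [Finset.mem_filter, Finset.mem_univ, true_and] at hZ ⊢
    exact Finset.image_subset_image hZ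
  · intro W hW
    have : mapg g (mapg g⁻¹ W) = W := by
      have := mapg_inv g⁻¹ W
      simpa using this
    exact this
  · intro Z hZ; exact mapg_inv g Z
  · intro W hW
    exact (prb_point_perm μ X hhom g⁻¹ W).symm
end Hom

section Events
set_option linter.unusedSectionVars false
variable {n : ℕ} {Ω : Type*} [MeasurableSpace Ω] (μ : Measure Ω) [IsProbabilityMeasure μ]
  (X : Ω → Finset (Finset (Fin n)))
  (hmeas : ∀ Y, MeasurableSet {ω | X ω = Y})
  (hXc : ∀ ω, SComplex (X ω))
  (hhom : Homogeneous μ X) (hsi : SpatInd μ X)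

lemma scomplex_powerset (s : Finset (Fin n)) : SComplex s.powerset := by
  constructor
  · simp
  · intro σ hσ τ hτ
    simp only [Finset.mem_powerset] at *
    exact hτ.trans hσ

lemma scomplex_union {Y₁ Y₂ : Finset (Finset (Fin n))} (h₁ : SComplex Y₁) (h₂ : SComplex Y₂) :
    SComplex (Y₁ ∪ Y₂) := by
  constructor
  · exact Finset.mem_union_left _ h₁.1
  · intro σ hσ τ hτ
    rcases Finset.mem_union.mp hσ with h | h
    · exact Finset.mem_union_left _ (h₁.2 σ h τ hτ)
    · exact Finset.mem_union_right _ (h₂.2 σ h τ hτ)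

lemma powerset_inter' (s t : Finset (Fin n)) :
    (s ∩ t).powerset = s.powerset ∩ t.powerset := by
  ext u
  simp only [Finset.mem_powerset, Finset.mem_inter, Finset.subset_inter_iff]

include hXc in
lemma pow_subset_event (s : Finset (Fin n)) :
    {ω | s.powerset ⊆ X ω} = {ω | s ∈ X ω} := by
  ext ω
  simp only [Set.mem_setOf_eq]
  constructor
  · intro h; exact h (Finset.mem_powerset_self s)
  · intro h τ hτ; exact (hXc ω).2 s h τ hτ

include hXc in
lemma pow_union_event (s t : Finset (Fin n)) :
    {ω | s.powerset ∪ t.powerset ⊆ X ω} = {ω | s ∈ X ω ∧ t ∈ X ω} := by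
  ext ω
  simp only [Set.mem_setOf_eq, Finset.union_subset_iff]
  constructor
  · rintro ⟨h1, h2⟩
    exact ⟨h1 (Finset.mem_powerset_self s), h2 (Finset.mem_powerset_self t)⟩
  · rintro ⟨h1, h2⟩
    exact ⟨fun τ hτ => (hXc ω).2 s h1 τ hτ, fun τ hτ => (hXc ω).2 t h2 τ hτ⟩

include hXc hsi in
lemma pairSI (s t : Finset (Fin n)) :
    prb μ {ω | s ∈ X ω ∧ t ∈ X ω} * prb μ {ω | s ∩ t ∈ X ω} =
      prb μ {ω | s ∈ X ω} * prb μ {ω | t ∈ X ω} := by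
  have h := hsi s.powerset t.powerset (scomplex_powerset s) (scomplex_powerset t)
  rwa [pow_union_event X hXc, ← powerset_inter', pow_subset_event X hXc,
    pow_subset_event X hXc, pow_subset_event X hXc] at h

include hXc hsi in
lemma tripleSI (b s t : Finset (Fin n)) :
    prb μ {ω | b ∈ X ω ∧ (s ∈ X ω ∧ t ∈ X ω)} * prb μ {ω | b ∩ s ∈ X ω ∧ b ∩ t ∈ X ω} =
      prb μ {ω | b ∈ X ω} * prb μ {ω | s ∈ X ω ∧ t ∈ X ω} := by
  have h := hsi b.powerset (s.powerset ∪ t.powerset) (scomplex_powerset b)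
    (scomplex_union (scomplex_powerset s) (scomplex_powerset t))
  have hU : {ω | b.powerset ∪ (s.powerset ∪ t.powerset) ⊆ X ω} =
      {ω | b ∈ X ω ∧ (s ∈ X ω ∧ t ∈ X ω)} := by
    ext ω
    simp only [Set.mem_setOf_eq, Finset.union_subset_iff]
    constructor
    · rintro ⟨h1, h2, h3⟩
      exact ⟨h1 (Finset.mem_powerset_self b), h2 (Finset.mem_powerset_self s),
        h3 (Finset.mem_powerset_self t)⟩
    · rintro ⟨h1, h2, h3⟩
      exact ⟨fun τ hτ => (hXc ω).2 b h1 τ hτ, fun τ hτ => (hXc ω).2 s h2 τ hτ,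
        fun τ hτ => (hXc ω).2 t h3 τ hτ⟩
  have hI : b.powerset ∩ (s.powerset ∪ t.powerset) = (b ∩ s).powerset ∪ (b ∩ t).powerset := by
    rw [Finset.inter_union_distrib_left, powerset_inter', powerset_inter']
  rw [hU, hI, pow_union_event X hXc, pow_union_event X hXc, pow_subset_event X hXc] at h
  exact h

include hmeas hhom in
lemma prb_mem_perm (g : Equiv.Perm (Fin n)) (σ : Finset (Fin n)) :
    prb μ {ω | σ.image ⇑g ∈ X ω} = prb μ {ω | σ ∈ X ω} := by
  have h := prb_subset_perm μ X hmeas hhom g {σ}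
  have h1 : mapg g {σ} = {σ.image ⇑g} := by simp [mapg]
  rw [h1] at h
  simpa [Finset.singleton_subset_iff] using h

include hmeas hhom in
lemma prb_pairmem_perm (g : Equiv.Perm (Fin n)) (σ τ : Finset (Fin n)) :
    prb μ {ω | σ.image ⇑g ∈ X ω ∧ τ.image ⇑g ∈ X ω} = prb μ {ω | σ ∈ X ω ∧ τ ∈ X ω} := by
  have h := prb_subset_perm μ X hmeas hhom g {σ, τ}
  have h1 : mapg g {σ, τ} = {σ.image ⇑g, τ.image ⇑g} := by simp [mapg]
  rw [h1] at h
  simpa [Finset.insert_subset_iff, Finset.singleton_subset_iff] using h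

end Events

section Perms

/-- `{0, …, j-1}` -/
def Aset (n j : ℕ) : Finset (Fin n) := Finset.univ.filter (fun v => (v : ℕ) < j)
/-- `{1, …, j}` -/
def A'set (n j : ℕ) : Finset (Fin n) := Finset.univ.filter (fun v => 1 ≤ (v : ℕ) ∧ (v : ℕ) ≤ j)
/-- `{0} ∪ {2, …, j+1}` -/
def Bset (n j : ℕ) : Finset (Fin n) :=
  Finset.univ.filter (fun v => (v : ℕ) = 0 ∨ (2 ≤ (v : ℕ) ∧ (v : ℕ) ≤ j + 1))
/-- `{2, …, j+1}` -/
def Cset (n j : ℕ) : Finset (Fin n) :=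
  Finset.univ.filter (fun v => 2 ≤ (v : ℕ) ∧ (v : ℕ) ≤ j + 1)

def cycFun (n m : ℕ) (h : m < n) : Fin n → Fin n := fun v =>
  if (v : ℕ) = 0 then ⟨m, h⟩
  else if (v : ℕ) ≤ m then ⟨(v : ℕ) - 1, Nat.lt_of_le_of_lt (Nat.sub_le _ 1) v.isLt⟩
  else v

lemma cycFun_val (n m : ℕ) (h : m < n) (v : Fin n) :
    (cycFun n m h v : ℕ) =
      if (v : ℕ) = 0 then m else if (v : ℕ) ≤ m then (v : ℕ) - 1 else (v : ℕ) := by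
  unfold cycFun
  split_ifs <;> rfl

lemma cycFun_inj (n m : ℕ) (h : m < n) : Function.Injective (cycFun n m h) := by
  intro a b hab
  apply Fin.ext
  have ha := a.isLt; have hb := b.isLt
  have hv := congrArg Fin.val hab
  rw [cycFun_val, cycFun_val] at hv
  split_ifs at hv <;> omega

noncomputable def cycPerm (n m : ℕ) (h : m < n) : Equiv.Perm (Fin n) :=
  Equiv.ofBijective _ ((Finite.injective_iff_bijective).mp (cycFun_inj n m h))

lemma cycPerm_val (n m : ℕ) (h : m < n) (v : Fin n) :
    ((cycPerm n m h v : Fin n) : ℕ) =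
      if (v : ℕ) = 0 then m else if (v : ℕ) ≤ m then (v : ℕ) - 1 else (v : ℕ) :=
  cycFun_val n m h v

lemma cyc_image (n m : ℕ) (h : m < n) :
    (A'set n m).image ⇑(cycPerm n m h) = Aset n m := by
  ext w
  simp only [Finset.mem_image, A'set, Aset, Finset.mem_filter, Finset.mem_univ, true_and]
  constructor
  · rintro ⟨v, hv, rfl⟩
    rw [cycPerm_val]
    split_ifs <;> first | omega | exact (‹False›).elim
  · intro hw
    refine ⟨⟨(w : ℕ) + 1, by omega⟩, ?_, ?_⟩
    · rw [Fin.val_mk]; omega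
    · apply Fin.ext
      rw [cycPerm_val, Fin.val_mk]
      split_ifs <;> first | omega | exact (‹False›).elim

def swpFun (n j : ℕ) (h : j + 1 < n) : Fin n → Fin n := fun v =>
  if (v : ℕ) = 1 then ⟨j + 1, h⟩
  else if 2 ≤ (v : ℕ) ∧ (v : ℕ) ≤ j + 1 then
    ⟨(v : ℕ) - 1, Nat.lt_of_le_of_lt (Nat.sub_le _ 1) v.isLt⟩
  else v

lemma swpFun_val (n j : ℕ) (h : j + 1 < n) (v : Fin n) :
    (swpFun n j h v : ℕ) =
      if (v : ℕ) = 1 then j + 1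
      else if 2 ≤ (v : ℕ) ∧ (v : ℕ) ≤ j + 1 then (v : ℕ) - 1 else (v : ℕ) := by
  unfold swpFun
  split_ifs <;> rfl

lemma swpFun_inj (n j : ℕ) (h : j + 1 < n) : Function.Injective (swpFun n j h) := by
  intro a b hab
  apply Fin.ext
  have ha := a.isLt; have hb := b.isLt
  have hv := congrArg Fin.val hab
  rw [swpFun_val, swpFun_val] at hv
  split_ifs at hv <;> omega

noncomputable def swpPerm (n j : ℕ) (h : j + 1 < n) : Equiv.Perm (Fin n) :=
  Equiv.ofBijective _ ((Finite.injective_iff_bijective).mp (swpFun_inj n j h))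

lemma swpPerm_val (n j : ℕ) (h : j + 1 < n) (v : Fin n) :
    ((swpPerm n j h v : Fin n) : ℕ) =
      if (v : ℕ) = 1 then j + 1
      else if 2 ≤ (v : ℕ) ∧ (v : ℕ) ≤ j + 1 then (v : ℕ) - 1 else (v : ℕ) :=
  swpFun_val n j h v

lemma swp_image_B (n j : ℕ) (h : j + 1 < n) :
    (Bset n j).image ⇑(swpPerm n j h) = Aset n (j + 1) := by
  ext w
  simp only [Finset.mem_image, Bset, Aset, Finset.mem_filter, Finset.mem_univ, true_and]
  constructor
  · rintro ⟨v, hv, rfl⟩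
    rw [swpPerm_val]
    split_ifs <;> first | omega | exact (‹False›).elim
  · intro hw
    by_cases hw0 : (w : ℕ) = 0
    · refine ⟨⟨0, by omega⟩, ?_, ?_⟩
      · rw [Fin.val_mk]; omega
      · apply Fin.ext
        rw [swpPerm_val, Fin.val_mk]
        split_ifs <;> first | omega | exact (‹False›).elim
    · refine ⟨⟨(w : ℕ) + 1, by omega⟩, ?_, ?_⟩
      · rw [Fin.val_mk]; omega
      · apply Fin.ext
        rw [swpPerm_val, Fin.val_mk]
        split_ifs <;> first | omega | exact (‹False›).elim

lemma swp_image_B' (n j : ℕ) (h : j + 1 < n) (hj : 1 ≤ j) :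
    (Bset n (j - 1)).image ⇑(swpPerm n j h) = Aset n j := by
  ext w
  simp only [Finset.mem_image, Bset, Aset, Finset.mem_filter, Finset.mem_univ, true_and]
  constructor
  · rintro ⟨v, hv, rfl⟩
    rw [swpPerm_val]
    split_ifs <;> first | omega | exact (‹False›).elim
  · intro hw
    by_cases hw0 : (w : ℕ) = 0
    · refine ⟨⟨0, by omega⟩, ?_, ?_⟩
      · rw [Fin.val_mk]; omega
      · apply Fin.ext
        rw [swpPerm_val, Fin.val_mk]
        split_ifs <;> first | omega | exact (‹False›).elim
    · refine ⟨⟨(w : ℕ) + 1, by omega⟩, ?_, ?_⟩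
      · rw [Fin.val_mk]; omega
      · apply Fin.ext
        rw [swpPerm_val, Fin.val_mk]
        split_ifs <;> first | omega | exact (‹False›).elim

lemma swp_image_C (n j : ℕ) (h : j + 1 < n) :
    (Cset n j).image ⇑(swpPerm n j h) = A'set n j := by
  ext w
  simp only [Finset.mem_image, Cset, A'set, Finset.mem_filter, Finset.mem_univ, true_and]
  constructor
  · rintro ⟨v, hv, rfl⟩
    rw [swpPerm_val]
    split_ifs <;> first | omega | exact (‹False›).elim
  · intro hw
    refine ⟨⟨(w : ℕ) + 1, by omega⟩, ?_, ?_⟩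
    · rw [Fin.val_mk]; omega
    · apply Fin.ext
      rw [swpPerm_val, Fin.val_mk]
      split_ifs <;> first | omega | exact (‹False›).elim

lemma Aset_inter_A'set (n j : ℕ) : Aset n (j + 1) ∩ A'set n (j + 1) = A'set n j := by
  ext v
  simp only [Aset, A'set, Finset.mem_inter, Finset.mem_filter, Finset.mem_univ, true_and]
  omega

lemma Bset_inter_Aset (n j : ℕ) (hj : 1 ≤ j) :
    Bset n j ∩ Aset n (j + 1) = Bset n (j - 1) := by
  ext v
  simp only [Bset, Aset, Finset.mem_inter, Finset.mem_filter, Finset.mem_univ, true_and]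
  omega

lemma Bset_inter_A'set (n j : ℕ) : Bset n j ∩ A'set n (j + 1) = Cset n j := by
  ext v
  simp only [Bset, A'set, Cset, Finset.mem_inter, Finset.mem_filter, Finset.mem_univ, true_and]
  omega

lemma Aset_subset (n : ℕ) {j j' : ℕ} (h : j ≤ j') : Aset n j ⊆ Aset n j' := by
  intro v
  simp only [Aset, Finset.mem_filter, Finset.mem_univ, true_and]
  omega

lemma Bset_subset_Aset (n j : ℕ) : Bset n j ⊆ Aset n (j + 2) := by
  intro v
  simp only [Bset, Aset, Finset.mem_filter, Finset.mem_univ, true_and]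
  omega

lemma A'set_subset_Aset (n j : ℕ) : A'set n j ⊆ Aset n (j + 1) := by
  intro v
  simp only [A'set, Aset, Finset.mem_filter, Finset.mem_univ, true_and]
  omega

end Perms

section Rel
set_option linter.unusedSectionVars false
variable {n : ℕ} {Ω : Type*} [MeasurableSpace Ω] (μ : Measure Ω) [IsProbabilityMeasure μ]
  (X : Ω → Finset (Finset (Fin n)))

noncomputable def qq (m : ℕ) : ℝ := prb μ {ω | Aset n m ∈ X ω}

noncomputable def PP (m : ℕ) : ℝ :=
  prb μ {ω | Aset n m ∈ X ω ∧ A'set n m ∈ X ω}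

variable (hmeas : ∀ Y, MeasurableSet {ω | X ω = Y})
  (hXc : ∀ ω, SComplex (X ω))
  (hhom : Homogeneous μ X) (hsi : SpatInd μ X)

include hXc in
lemma mem_of_subset_mem {σ τ : Finset (Fin n)} (h : σ ⊆ τ) (ω : Ω) (hτ : τ ∈ X ω) :
    σ ∈ X ω :=
  (hXc ω).2 τ hτ σ (Finset.mem_powerset.mpr h)

include hXc in
lemma qq_zero : qq μ X 0 = 1 := by
  have h : {ω | Aset n 0 ∈ X ω} = Set.univ := by
    ext ω
    simp only [Set.mem_setOf_eq, Set.mem_univ, iff_true]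
    have : Aset n 0 = ∅ := by
      ext v; simp [Aset]
    rw [this]
    exact (hXc ω).1
  rw [qq, h, prb_univ]

include hXc in
lemma qq_mono {m m' : ℕ} (h : m ≤ m') : qq μ X m' ≤ qq μ X m := by
  apply prb_mono
  intro ω hω
  exact mem_of_subset_mem X hXc (Aset_subset n h) ω hω

lemma qq_nonneg (m : ℕ) : 0 ≤ qq μ X m := prb_nonneg μ _

lemma PP_nonneg (m : ℕ) : 0 ≤ PP μ X m := prb_nonneg μ _

include hmeas hhom in
lemma qq_A' {m : ℕ} (h : m < n) : prb μ {ω | A'set n m ∈ X ω} = qq μ X m := by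
  have hp := prb_mem_perm μ X hmeas hhom (cycPerm n m h) (A'set n m)
  rw [cyc_image n m h] at hp
  rw [qq, ← hp]

include hmeas hhom in
lemma qq_B {j : ℕ} (h : j + 1 < n) : prb μ {ω | Bset n j ∈ X ω} = qq μ X (j + 1) := by
  have hp := prb_mem_perm μ X hmeas hhom (swpPerm n j h) (Bset n j)
  rw [swp_image_B n j h] at hp
  rw [qq, ← hp]

include hmeas hhom in
lemma PP_beta {j : ℕ} (hj : 1 ≤ j) (h : j + 1 < n) :
    prb μ {ω | Bset n (j - 1) ∈ X ω ∧ Cset n j ∈ X ω} = PP μ X j := by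
  have hp := prb_pairmem_perm μ X hmeas hhom (swpPerm n j h) (Bset n (j - 1)) (Cset n j)
  rw [swp_image_B' n j h hj, swp_image_C n j h] at hp
  rw [PP, ← hp]

include hmeas hXc hhom hsi in
lemma relF3 {j : ℕ} (h : j + 1 < n) :
    PP μ X (j + 1) * qq μ X j = qq μ X (j + 1) * qq μ X (j + 1) := by
  have hp := pairSI μ X hXc hsi (Aset n (j + 1)) (A'set n (j + 1))
  rw [Aset_inter_A'set] at hp
  rw [qq_A' μ X hmeas hhom (by omega : j < n)] at hp
  rw [qq_A' μ X hmeas hhom h] at hp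
  exact hp

include hmeas hXc hhom hsi in
lemma relK {j : ℕ} (hj : 1 ≤ j) (h : j + 2 ≤ n) :
    qq μ X (j + 2) * PP μ X j ≤ qq μ X (j + 1) * PP μ X (j + 1) := by
  have h1 : j + 1 < n := by omega
  have hp := tripleSI μ X hXc hsi (Bset n j) (Aset n (j + 1)) (A'set n (j + 1))
  rw [Bset_inter_Aset n j hj, Bset_inter_A'set n j] at hp
  rw [PP_beta μ X hmeas hhom hj h1, qq_B μ X hmeas hhom h1] at hp
  -- hp : prb triple * PP j = qq (j+1) * PP (j+1)
  have hmono : qq μ X (j + 2) ≤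
      prb μ {ω | Bset n j ∈ X ω ∧ (Aset n (j + 1) ∈ X ω ∧ A'set n (j + 1) ∈ X ω)} := by
    apply prb_mono
    intro ω hω
    simp only [Set.mem_setOf_eq] at hω ⊢
    refine ⟨mem_of_subset_mem X hXc (Bset_subset_Aset n j) ω hω,
      mem_of_subset_mem X hXc (Aset_subset n (by omega)) ω hω,
      mem_of_subset_mem X hXc ?_ ω hω⟩
    exact (A'set_subset_Aset n (j + 1)).trans (Aset_subset n (by omega))
  calc qq μ X (j + 2) * PP μ X j ≤
      prb μ {ω | Bset n j ∈ X ω ∧ (Aset n (j + 1) ∈ X ω ∧ A'set n (j + 1) ∈ X ω)} * PP μ X j :=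
        mul_le_mul_of_nonneg_right hmono (PP_nonneg μ X j)
    _ = qq μ X (j + 1) * PP μ X (j + 1) := hp

end Rel

section Arith

lemma arith_main (k : ℕ) (q P : ℕ → ℝ)
    (hq0 : q 0 = 1)
    (hqpos : ∀ m, m ≤ k + 2 → 0 < q m)
    (hPpos : ∀ j, j ≤ k → 0 < P (j + 1))
    (hF3 : ∀ j, j ≤ k → P (j + 1) * q j = q (j + 1) * q (j + 1))
    (hK : ∀ j, 1 ≤ j → j ≤ k → q (j + 2) * P j ≤ q (j + 1) * P (j + 1)) :
    q 1 * (q (k + 2) / P (k + 1)) ^ (k + 1) ≤ q (k + 2) / q (k + 1) := by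
  set s : ℝ := q (k + 2) / P (k + 1) with hs
  have hs0 : 0 ≤ s := div_nonneg (hqpos (k + 2) (by omega)).le (hPpos k (by omega)).le
  -- the chain inequality
  have chain : ∀ i, i ≤ k → 1 ≤ k + 1 - i →
      q (k + 2) * P (k + 1 - i) ≤ q (k + 2 - i) * P (k + 1) := by
    intro i
    induction i with
    | zero => intro _ _; simp
    | succ i IH =>
      intro hik h1
      have hik' : i ≤ k := by omega
      have h1' : 1 ≤ k + 1 - i := by omega
      have IH' := IH hik' h1'
      set m : ℕ := k - i with hm
      have e1 : k + 1 - (i + 1) = m := by omega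
      have e2 : k + 1 - i = m + 1 := by omega
      have e3 : k + 2 - i = m + 2 := by omega
      have e4 : k + 2 - (i + 1) = m + 1 := by omega
      rw [e1, e4]
      rw [e2, e3] at IH'
      have hKm := hK m (by omega) (by omega)
      have hq1 : 0 < q (m + 1) := hqpos _ (by omega)
      have hq2 : 0 < q (m + 2) := hqpos _ (by omega)
      have hqk2 : 0 < q (k + 2) := hqpos _ (by omega)
      nlinarith [mul_le_mul_of_nonneg_left hKm hqk2.le,
        mul_le_mul_of_nonneg_left IH' hq1.le]
  have hSM : ∀ j, 1 ≤ j → j ≤ k + 1 → s * P j ≤ q (j + 1) := by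
    intro j hj1 hjk
    have hc := chain (k + 1 - j) (by omega) (by omega)
    have e1 : k + 1 - (k + 1 - j) = j := by omega
    have e2 : k + 2 - (k + 1 - j) = j + 1 := by omega
    rw [e1, e2] at hc
    have hPk : 0 < P (k + 1) := hPpos k (by omega)
    rw [hs, div_mul_eq_mul_div, div_le_iff₀ hPk]
    linarith [hc]
  have hC : ∀ m, 1 ≤ m → m ≤ k + 1 → q 1 * q m * s ^ m ≤ q (m + 1) := by
    intro m hm
    induction m, hm using Nat.le_induction with
    | base =>
      intro _
      have e : q 1 * q 1 * s ^ 1 = s * P 1 := by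
        have h3 := hF3 0 (by omega)
        rw [hq0] at h3
        rw [pow_one, ← h3]
        ring
      rw [e]
      exact hSM 1 (by omega) (by omega)
    | succ m hm IH =>
      intro hmk
      have IH' := IH (by omega)
      have hq1 : 0 < q 1 := hqpos 1 (by omega)
      have hqm : 0 < q m := hqpos m (by omega)
      have hqm1 : 0 < q (m + 1) := hqpos (m + 1) (by omega)
      have hSMm := hSM (m + 1) (by omega) (by omega)
      have h3 := hF3 m (by omega)
      have key : (q 1 * q (m + 1) * s ^ (m + 1)) * q m ≤ q (m + 2) * q m := by
        calc (q 1 * q (m + 1) * s ^ (m + 1)) * q m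
            = (q 1 * q m * s ^ m) * (s * q (m + 1)) := by ring
          _ ≤ q (m + 1) * (s * q (m + 1)) := by
              apply mul_le_mul_of_nonneg_right IH'
              positivity
          _ = (s * P (m + 1)) * q m := by
              have : P (m + 1) * q m = q (m + 1) * q (m + 1) := h3
              linear_combination (-s) * this
          _ ≤ q (m + 2) * q m := mul_le_mul_of_nonneg_right hSMm hqm.le
      exact le_of_mul_le_mul_right key hqm
  have hfin := hC (k + 1) (by omega) (by omega)
  have hqk1 : 0 < q (k + 1) := hqpos (k + 1) (by omega)
  rw [le_div_iff₀ hqk1]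
  calc q 1 * s ^ (k + 1) * q (k + 1) = q 1 * q (k + 1) * s ^ (k + 1) := by ring
    _ ≤ q (k + 2) := hfin

end Arith

/-- `r_k ≥ q₀ · s_k^{k+1}`. -/
theorem rpar_ge_qpar_mul_spar_pow (n k : ℕ) (hn : k + 2 ≤ n)
    {Ω : Type*} [MeasurableSpace Ω] (μ : Measure Ω) [IsProbabilityMeasure μ]
    (X : Ω → Finset (Finset (Fin n)))
    (hmeas : ∀ Y, MeasurableSet {ω | X ω = Y})
    (hXc : ∀ ω, SComplex (X ω))
    (hhom : Homogeneous μ X) (hsi : SpatInd μ X) :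
    qpar μ X 0 * spar μ X k ^ (k + 1) ≤ rpar μ X (k : ℤ) := by
  classical
  have hstd : ∀ j : ℕ, stdSimp n (j : ℤ) = Aset n (j + 1) := by
    intro j
    ext v
    simp only [stdSimp, Aset, Finset.mem_filter, Finset.mem_univ, true_and]
    omega
  have hTk1 : stdSimp n ((k : ℤ) + 1) = Aset n (k + 2) := by
    rw [show ((k : ℤ) + 1) = ((k + 1 : ℕ) : ℤ) from (by push_cast; ring), hstd]
  have hT' : stdSimp' n k = A'set n (k + 1) := by
    ext v
    simp only [stdSimp', A'set, Finset.mem_filter, Finset.mem_univ, true_and]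
  -- rpar is nonnegative
  have hrnn : 0 ≤ rpar μ X (k : ℤ) := by
    rw [rpar]
    split_ifs
    · exact div_nonneg (prb_nonneg μ _) (prb_nonneg μ _)
    · exact le_refl _
  have hT0 : stdSimp n (0 : ℤ) = Aset n 1 := by
    ext v
    simp only [stdSimp, Aset, Finset.mem_filter, Finset.mem_univ, true_and]
    omega
  have hq0eq : qpar μ X 0 = qq μ X 1 := by
    rw [qpar, if_neg (by norm_num), hT0, qq]
  have hpairset : {ω | stdSimp n (k : ℤ) ∈ X ω} ∩ {ω | stdSimp' n k ∈ X ω} =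
      {ω | Aset n (k + 1) ∈ X ω ∧ A'set n (k + 1) ∈ X ω} := by
    rw [hstd k, hT']
    rfl
  by_cases hP : 0 < prb μ ({ω | stdSimp n (k : ℤ) ∈ X ω} ∩ {ω | stdSimp' n k ∈ X ω})
  · -- pair event has positive probability
    have hPPeq : prb μ ({ω | stdSimp n (k : ℤ) ∈ X ω} ∩ {ω | stdSimp' n k ∈ X ω}) =
        PP μ X (k + 1) := by rw [hpairset]; rfl
    have hPPpos : 0 < PP μ X (k + 1) := hPPeq ▸ hP
    have habs : {ω | Aset n (k + 2) ∈ X ω} ∩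
        {ω | Aset n (k + 1) ∈ X ω ∧ A'set n (k + 1) ∈ X ω} = {ω | Aset n (k + 2) ∈ X ω} := by
      apply Set.inter_eq_left.mpr
      intro ω hω
      exact ⟨mem_of_subset_mem X hXc (Aset_subset n (by omega)) ω hω,
        mem_of_subset_mem X hXc (A'set_subset_Aset n (k + 1)) ω hω⟩
    have hspar : spar μ X k = qq μ X (k + 2) / PP μ X (k + 1) := by
      rw [spar, if_pos hP, condP, hpairset, hTk1, habs]
      rfl
    by_cases hq2 : 0 < qq μ X (k + 2)
    · -- main case
      have hqpos : ∀ m, m ≤ k + 2 → 0 < qq μ X m := fun m hm =>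
        lt_of_lt_of_le hq2 (qq_mono μ X hXc hm)
      have hPpos : ∀ j, j ≤ k → 0 < PP μ X (j + 1) := by
        intro j hj
        have h3 := relF3 μ X hmeas hXc hhom hsi (show j + 1 < n by omega)
        nlinarith [hqpos j (by omega), hqpos (j + 1) (by omega)]
      have hqk1 : 0 < qq μ X (k + 1) := hqpos (k + 1) (by omega)
      have hqpark : qpar μ X (k : ℤ) = qq μ X (k + 1) := by
        rw [qpar, if_neg (by omega), hstd k, qq]
      have habs2 : {ω | Aset n (k + 2) ∈ X ω} ∩ {ω | Aset n (k + 1) ∈ X ω} =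
          {ω | Aset n (k + 2) ∈ X ω} := by
        apply Set.inter_eq_left.mpr
        intro ω hω
        exact mem_of_subset_mem X hXc (Aset_subset n (by omega)) ω hω
      have hrpar : rpar μ X (k : ℤ) = qq μ X (k + 2) / qq μ X (k + 1) := by
        rw [rpar, if_pos (show 0 < qpar μ X (k:ℤ) from by rw [hqpark]; exact hqk1), condP, hTk1, hstd k, habs2, qq, qq]
      rw [hrpar, hspar, hq0eq]
      exact arith_main k (qq μ X) (PP μ X) (qq_zero μ X hXc) hqpos hPpos
        (fun j hj => relF3 μ X hmeas hXc hhom hsi (show j + 1 < n by omega))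
        (fun j hj1 hjk => relK μ X hmeas hXc hhom hsi hj1 (show j + 2 ≤ n by omega))
    · -- q_{k+2} = 0
      have hq2' : qq μ X (k + 2) = 0 :=
        le_antisymm (not_lt.mp hq2) (qq_nonneg μ X _)
      rw [hq0eq, hspar, hq2', zero_div, zero_pow (Nat.succ_ne_zero k), mul_zero]
      exact hrnn
  · -- pair event has zero probability: spar = 0
    rw [spar, if_neg hP, zero_pow (Nat.succ_ne_zero k), mul_zero]
    exact hrnn
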